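/- arXiv:math/0504519 — 3 statements merged into one kernel-verified Lean document; each statement's English description precedes it below -/
import Mathlib

section
/- The group with presentation ⟨d, a, c | d³ = a² = c² = (ac)² = 1, ad = da, d = cd²c⟩ is isomorphic to (ℤ/3 ⋊ ℤ/2) × ℤ/2, i.e. to S₃ × ℤ/2. -/
/-!
Since `a` commutes with `d` and `c`, and `c d = d² c`, every element is `dⁱ aʲ cᵏ` with
`i < 3`, `j, k < 2`, so the group has at most 12 elements. Sending `d` to a 3-cycle, `c` to a
transposition and `a` to the generator of `ℤ/2` respects the relations, and the 12 words `dⁱ aʲ cᵏ`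
go to the 12 distinct elements of `S₃ × ℤ/2`; hence the induced map is an isomorphism.
-/

/-- Generators: `0 = d`, `1 = a`, `2 = c`. -/
def relsHM : Set (FreeGroup (Fin 3)) :=
  { (FreeGroup.of 0) ^ 3,
    (FreeGroup.of 1) ^ 2,
    (FreeGroup.of 2) ^ 2,
    (FreeGroup.of 1 * FreeGroup.of 2) ^ 2,
    FreeGroup.of 1 * FreeGroup.of 0 * (FreeGroup.of 1)⁻¹ * (FreeGroup.of 0)⁻¹,
    (FreeGroup.of 0)⁻¹ * (FreeGroup.of 2 * (FreeGroup.of 0) ^ 2 * FreeGroup.of 2) }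

section Monoid

variable {M N : Type*} [Monoid M] [Monoid N] {d a c : M} {e : ℕ}

theorem pow_mul_eq_pow_pow_mul (h : c * d = d ^ e * c) (k : ℕ) :
    c ^ k * d = d ^ e ^ k * c ^ k := by
  induction k with
  | zero => simp
  | succ k ih =>
    calc c ^ (k + 1) * d = c * d ^ e ^ k * c ^ k := by rw [pow_succ', mul_assoc, ih, mul_assoc]
      _ = d ^ e ^ (k + 1) * c ^ (k + 1) := by
        rw [(SemiconjBy.pow_right h (e ^ k)).eq, ← pow_mul, pow_succ', pow_succ', mul_assoc]

theorem exists_pow_mul_pow_mul_pow_of_mem_closure (had : Commute a d) (hac : Commute a c)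
    (hcd : c * d = d ^ e * c) {x : M} (hx : x ∈ Submonoid.closure {d, a, c}) :
    ∃ i j k : ℕ, x = d ^ i * a ^ j * c ^ k := by
  induction hx using Submonoid.closure_induction_right with
  | one => exact ⟨0, 0, 0, by simp⟩
  | mul_right x _ y hy ih =>
    obtain ⟨i, j, k, rfl⟩ := ih
    rcases hy with hy | hy | hy <;> rw [hy]
    · refine ⟨i + e ^ k, j, k, ?_⟩
      rw [mul_assoc, pow_mul_eq_pow_pow_mul hcd, ← mul_assoc, mul_assoc (d ^ i),
        (had.pow_pow j (e ^ k)).eq, pow_add]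
      simp only [mul_assoc]
    · refine ⟨i, j + 1, k, ?_⟩
      rw [mul_assoc, ← (hac.pow_right k).eq, pow_succ]
      simp only [mul_assoc]
    · exact ⟨i, j, k + 1, by rw [pow_succ, mul_assoc]⟩

def powProd {p q r : ℕ} (d a c : M) (x : Fin p × Fin q × Fin r) : M :=
  d ^ (x.1 : ℕ) * a ^ (x.2.1 : ℕ) * c ^ (x.2.2 : ℕ)

theorem MonoidHom.map_powProd {p q r : ℕ} (f : M →* N) (x : Fin p × Fin q × Fin r) :
    f (powProd d a c x) = powProd (f d) (f a) (f c) x := by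
  simp only [powProd, map_mul, map_pow]

end Monoid

theorem powProd_surjective {G : Type*} [Group G] {d a c : G} {p q r e : ℕ}
    [NeZero p] [NeZero q] [NeZero r] (hd : d ^ p = 1) (ha : a ^ q = 1) (hc : c ^ r = 1)
    (had : Commute a d) (hac : Commute a c) (hcd : c * d = d ^ e * c)
    (hgen : Subgroup.closure {d, a, c} = ⊤) :
    Function.Surjective (powProd (p := p) (q := q) (r := r) d a c) := by
  have hfin : ∀ y ∈ ({d, a, c} : Set G), IsOfFinOrder y := by
    rintro y (rfl | rfl | rfl) <;> exact isOfFinOrder_iff_pow_eq_one.2 ⟨_, NeZero.pos _, ‹_›⟩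
  intro x
  have hx : x ∈ Submonoid.closure {d, a, c} := by
    rw [← Subgroup.closure_toSubmonoid_of_isOfFinOrder hfin, hgen]
    trivial
  obtain ⟨i, j, k, rfl⟩ := exists_pow_mul_pow_mul_pow_of_mem_closure had hac hcd hx
  refine ⟨(⟨i % p, Nat.mod_lt _ (NeZero.pos p)⟩, ⟨j % q, Nat.mod_lt _ (NeZero.pos q)⟩,
    ⟨k % r, Nat.mod_lt _ (NeZero.pos r)⟩), ?_⟩
  simp only [powProd, ← pow_eq_pow_mod _ hd, ← pow_eq_pow_mod _ ha, ← pow_eq_pow_mod _ hc]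

theorem Commute.of_sq_eq_one {G : Type*} [Group G] {a b : G} (ha : a ^ 2 = 1) (hb : b ^ 2 = 1)
    (hab : (a * b) ^ 2 = 1) : Commute a b := by
  rw [sq, mul_eq_one_iff_inv_eq] at ha hb hab
  calc a * b = (a * b)⁻¹ := hab.symm
    _ = b * a := by rw [mul_inv_rev, ha, hb]

local notation "δ" => (PresentedGroup.of 0 : PresentedGroup relsHM)
local notation "α" => (PresentedGroup.of 1 : PresentedGroup relsHM)
local notation "γ" => (PresentedGroup.of 2 : PresentedGroup relsHM)

theorem gamma_mul_delta : γ * δ = δ ^ 2 * γ := by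
  have hγ : γ * γ = 1 := by rw [← sq]; exact PresentedGroup.one_of_mem (by simp [relsHM])
  have hδ : δ = γ * δ ^ 2 * γ := PresentedGroup.mk_eq_mk_of_inv_mul_mem (by simp [relsHM])
  calc γ * δ = γ * (γ * δ ^ 2 * γ) := congrArg (γ * ·) hδ
    _ = γ * γ * δ ^ 2 * γ := by simp only [mul_assoc]
    _ = δ ^ 2 * γ := by rw [hγ, one_mul]

theorem closure_delta_alpha_gamma : Subgroup.closure {δ, α, γ} = ⊤ := by
  rw [← PresentedGroup.closure_range_of]
  congr 1
  ext
  simp [Fin.exists_fin_succ, eq_comm]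

def s3xc2Gens : Fin 3 → Equiv.Perm (Fin 3) × Multiplicative (ZMod 2) :=
  ![(finRotate 3, 1), (1, Multiplicative.ofAdd 1), (Equiv.swap 0 1, 1)]

theorem lift_s3xc2Gens_eq_one : ∀ r ∈ relsHM, FreeGroup.lift s3xc2Gens r = 1 := by
  rintro r (rfl | rfl | rfl | rfl | rfl | rfl) <;>
    simp only [map_mul, map_inv, map_pow, FreeGroup.lift_apply_of] <;> decide

/-- The group `⟨d,a,c | d³ = a² = c² = (ac)² = 1, ad = da, d = cd²c⟩` is isomorphic to
`S₃ × ℤ/2`. -/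
theorem stmt1 :
    Nonempty (PresentedGroup relsHM ≃* Equiv.Perm (Fin 3) × Multiplicative (ZMod 2)) := by
  let f := PresentedGroup.toGroup lift_s3xc2Gens_eq_one
  have rel := @PresentedGroup.one_of_mem _ relsHM
  have hG : Function.Surjective (powProd (p := 3) (q := 2) (r := 2) δ α γ) :=
    powProd_surjective (rel (by simp [relsHM])) (rel (by simp [relsHM])) (rel (by simp [relsHM]))
      (commutatorElement_eq_one_iff_commute.1 (rel (by simp [relsHM])))
      (.of_sq_eq_one (rel (by simp [relsHM])) (rel (by simp [relsHM])) (rel (by simp [relsHM])))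
      gamma_mul_delta closure_delta_alpha_gamma
  have hT : Function.Bijective (powProd (p := 3) (q := 2) (r := 2) (f δ) (f α) (f γ)) := by
    simp only [f, PresentedGroup.toGroup.of]
    decide
  rw [← funext (f.map_powProd (d := δ) (a := α) (c := γ))] at hT
  exact ⟨MulEquiv.ofBijective f ⟨hT.1.of_comp_right hG, hT.2.of_comp⟩⟩
end

section
/- Let G be a group acting on a connected simple graph Γ whose vertex set is V, and suppose there is a symmetric 'intersection number' function i : V × V → ℕ with i(u,v) = 0 iff u = v, such that two distinct vertices are adjacent iff i(u,v) = 4. Suppose further that for any two distinct non-adjacent vertices v, ṽ there is a unique vertex u adjacent to v with i(u, ṽ) < i(v, ṽ), and i(u, ṽ) < i(v', ṽ) for every other vertex v' adjacent to v, and at most one vertex v'' adjacent to v satisfies i(u,ṽ) < i(v'', ṽ) ≤ i(v, ṽ), in which case v'' is adjacent to u. Then the barycentric-subdivision-style graph Γ̃ obtained by replacing each triangle of Γ by the cone on its vertices (with cone point the barycenter), and where every edge of Γ lies in exactly one triangle, contains no nontrivial cycle, i.e. is a tree. -/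
/-- A triangle of a simple graph: a 3-element vertex set, pairwise adjacent. -/
def IsTriangle {V : Type*} (Γ : SimpleGraph V) (t : Finset V) : Prop :=
  t.card = 3 ∧ ∀ u ∈ t, ∀ v ∈ t, u ≠ v → Γ.Adj u v

/-- The "spine" graph `Γ̃`: replace each triangle of `Γ` by the cone on its vertices,
with cone point the barycenter (a new vertex for each triangle), deleting the original
edges.  Vertices are the original vertices together with the barycenters; a vertex is
adjacent exactly to the barycenters of the triangles containing it. -/
def Subdiv {V : Type*} (Γ : SimpleGraph V) :
    SimpleGraph (V ⊕ {t : Finset V // IsTriangle Γ t}) where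
  Adj x y :=
    (∃ v t, x = Sum.inl v ∧ y = Sum.inr t ∧ v ∈ t.1) ∨
    (∃ v t, x = Sum.inr t ∧ y = Sum.inl v ∧ v ∈ t.1)
  symm := by
    constructor
    rintro x y (⟨v, t, rfl, rfl, h⟩ | ⟨v, t, rfl, rfl, h⟩)
    · exact Or.inr ⟨v, t, rfl, rfl, h⟩
    · exact Or.inl ⟨v, t, rfl, rfl, h⟩
  loopless := by
    constructor
    rintro x (⟨v, t, rfl, h, _⟩ | ⟨v, t, rfl, h, _⟩) <;> simp at h

/-!
Every vertex of a cycle in `Γ̃` has two distinct neighbours on it. Among the original vertices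
on a cycle, take a pair `v, w` with `i v w` maximal. The cycle leaves `v` through two distinct
triangles, hence towards two distinct vertices `a, b` of the cycle that are not adjacent
(otherwise `{v, a, b}` would be the unique triangle on both edges). Descending towards a distant
vertex always reaches adjacency, so non-adjacent distinct vertices have `i > 4`; thus
`i v w > 4` and Akbas's descent vertex `u` for `(v, w)` exists. Both `a` and `b` satisfy
`i u w < i · w ≤ i v w` unless they are `u`: if neither is, uniqueness gives `a = b`, and if
`a = u`, then `b` is adjacent to `u = a`.
-/

open SimpleGraph

theorem isTriangle_iff_isNClique {V : Type*} {Γ : SimpleGraph V} {t : Finset V} :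
    IsTriangle Γ t ↔ Γ.IsNClique 3 t := by
  rw [isNClique_iff, and_comm]
  rfl

theorem SimpleGraph.Walk.IsCycle.exists_adj_adj_ne {α : Type*} {G : SimpleGraph α} {u x : α}
    {c : G.Walk u u} (hc : c.IsCycle) (hx : x ∈ c.support) :
    ∃ y ∈ c.support, ∃ z ∈ c.support, y ≠ z ∧ G.Adj x y ∧ G.Adj x z := by
  obtain ⟨y, z, hyz, hnbr⟩ := Set.ncard_eq_two.mp (hc.ncard_neighborSet_toSubgraph_eq_two hx)
  have hy : c.toSubgraph.Adj x y := by
    rw [← Subgraph.mem_neighborSet, hnbr]; simp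
  have hz : c.toSubgraph.Adj x z := by
    rw [← Subgraph.mem_neighborSet, hnbr]; simp
  exact ⟨y, Walk.mem_support_of_adj_toSubgraph hy.symm, z,
    Walk.mem_support_of_adj_toSubgraph hz.symm, hyz, hy.adj_sub, hz.adj_sub⟩

namespace Subdiv

variable {V : Type*} {Γ : SimpleGraph V}

@[simp]
theorem adj_inl_inr {v : V} {t : {t : Finset V // IsTriangle Γ t}} :
    (Subdiv Γ).Adj (Sum.inl v) (Sum.inr t) ↔ v ∈ t.1 := by
  simp [Subdiv]

@[simp]
theorem adj_inr_inl {v : V} {t : {t : Finset V // IsTriangle Γ t}} :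
    (Subdiv Γ).Adj (Sum.inr t) (Sum.inl v) ↔ v ∈ t.1 := by
  simp [Subdiv]

@[simp]
theorem not_adj_inl_inl {u v : V} : ¬(Subdiv Γ).Adj (Sum.inl u) (Sum.inl v) := by
  simp [Subdiv]

@[simp]
theorem not_adj_inr_inr {s t : {t : Finset V // IsTriangle Γ t}} :
    ¬(Subdiv Γ).Adj (Sum.inr s) (Sum.inr t) := by
  simp [Subdiv]

theorem connected (hconn : Γ.Connected)
    (htri : ∀ u v, Γ.Adj u v → ∃ t : {t : Finset V // IsTriangle Γ t}, u ∈ t.1 ∧ v ∈ t.1) :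
    (Subdiv Γ).Connected := by
  have hinl : ∀ u v, (Subdiv Γ).Reachable (Sum.inl u) (Sum.inl v) := by
    intro u v
    rw [reachable_iff_reflTransGen]
    refine Relation.ReflTransGen.lift' Sum.inl (fun a b hab => ?_) _ _
      ((reachable_iff_reflTransGen u v).mp (hconn u v))
    obtain ⟨t, ha, hb⟩ := htri a b hab
    exact .tail (.single (b := Sum.inr t) (adj_inl_inr.mpr ha)) (adj_inr_inl.mpr hb)
  have hbase : ∀ x : V ⊕ {t : Finset V // IsTriangle Γ t}, ∃ u, (Subdiv Γ).Reachable x (Sum.inl u)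
    | .inl u => ⟨u, .rfl⟩
    | .inr t => by
      obtain ⟨u, hu⟩ : t.1.Nonempty := by rw [← Finset.card_pos, t.2.1]; norm_num
      exact ⟨u, (adj_inr_inl.mpr hu).reachable⟩
  have : Nonempty V := hconn.nonempty
  refine .mk fun x y => ?_
  obtain ⟨u, hu⟩ := hbase x
  obtain ⟨v, hv⟩ := hbase y
  exact hu.trans ((hinl u v).trans hv.symm)

theorem triangle_eq_of_eq_or_adj
    (huniq : ∀ u v, Γ.Adj u v → ∀ s t : {t : Finset V // IsTriangle Γ t},
      u ∈ s.1 ∧ v ∈ s.1 → u ∈ t.1 ∧ v ∈ t.1 → s = t)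
    {v a b : V} {ta tb : {t : Finset V // IsTriangle Γ t}}
    (hva : v ≠ a) (hvb : v ≠ b) (hvta : v ∈ ta.1) (hata : a ∈ ta.1) (hvtb : v ∈ tb.1)
    (hbtb : b ∈ tb.1) (hab : a = b ∨ Γ.Adj a b) : ta = tb := by
  classical
  have hadja : Γ.Adj v a := ta.2.2 v hvta a hata hva
  rcases hab with rfl | hab
  · exact huniq v a hadja ta tb ⟨hvta, hata⟩ ⟨hvtb, hbtb⟩
  · have hadjb : Γ.Adj v b := tb.2.2 v hvtb b hbtb hvb
    let T : {t : Finset V // IsTriangle Γ t} :=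
      ⟨{v, a, b}, isTriangle_iff_isNClique.mpr (is3Clique_triple_iff.mpr ⟨hadja, hadjb, hab⟩)⟩
    calc ta = T := huniq v a hadja ta T ⟨hvta, hata⟩ ⟨by simp [T], by simp [T]⟩
      _ = tb := huniq v b hadjb T tb ⟨by simp [T], by simp [T]⟩ ⟨hvtb, hbtb⟩

theorem isAcyclic
    (huniq : ∀ u v, Γ.Adj u v → ∀ s t : {t : Finset V // IsTriangle Γ t},
      u ∈ s.1 ∧ v ∈ s.1 → u ∈ t.1 ∧ v ∈ t.1 → s = t)
    (hclique : ∀ F : Finset V, F.Nonempty → ∃ v ∈ F, Γ.IsClique (↑F ∩ Γ.neighborSet v)) :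
    (Subdiv Γ).IsAcyclic := by
  classical
  intro x c hc
  have exists_other : ∀ t v, Sum.inr t ∈ c.support → ∃ a ∈ t.1, a ≠ v ∧ Sum.inl a ∈ c.support := by
    intro t v ht
    obtain ⟨a | _, ha, b | _, hb, hab, hta, htb⟩ := hc.exists_adj_adj_ne ht <;>
      simp only [adj_inr_inl, not_adj_inr_inr] at hta htb
    by_cases hav : a = v
    · exact ⟨b, htb, fun hbv => hab (by rw [hav, hbv]), hb⟩
    · exact ⟨a, hta, hav, ha⟩
  let F : Finset V := c.support.toFinset.preimage Sum.inl Sum.inl_injective.injOn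
  have hmemF : ∀ v, v ∈ F ↔ Sum.inl v ∈ c.support := by simp [F]
  have hF : F.Nonempty := by
    obtain ⟨_ | y, hy, -, -, -, hxy, -⟩ := hc.exists_adj_adj_ne c.start_mem_support
    · exact ⟨_, (hmemF _).mpr hy⟩
    · rcases x with v | t
      · exact ⟨v, (hmemF v).mpr c.start_mem_support⟩
      · simp at hxy
  obtain ⟨v, hvF, hv⟩ := hclique F hF
  obtain ⟨_ | ta, hta_mem, _ | tb, htb_mem, hne, hta, htb⟩ :=
    hc.exists_adj_adj_ne ((hmemF v).mp hvF) <;>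
    simp only [adj_inl_inr, not_adj_inl_inl] at hta htb
  obtain ⟨a, hata, hav, ha⟩ := exists_other ta v hta_mem
  obtain ⟨b, hbtb, hbv, hb⟩ := exists_other tb v htb_mem
  refine hne (congrArg Sum.inr (triangle_eq_of_eq_or_adj huniq (Ne.symm hav) (Ne.symm hbv)
    hta hata htb hbtb ?_))
  by_cases hab : a = b
  · exact .inl hab
  · exact .inr (hv ⟨(hmemF a).mpr ha, ta.2.2 v hta a hata (Ne.symm hav)⟩
      ⟨(hmemF b).mpr hb, tb.2.2 v htb b hbtb (Ne.symm hbv)⟩ hab)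

end Subdiv

section Descent

variable {V : Type*} {Γ : SimpleGraph V} {i : V → V → ℕ}

theorem four_lt_of_not_adj (hadj : ∀ u v, Γ.Adj u v → i u v = 4)
    (hdesc : ∀ v w, v ≠ w → ¬Γ.Adj v w → ∃ u, Γ.Adj v u ∧ i u w < i v w)
    {a b : V} (hab : a ≠ b) (hnadj : ¬Γ.Adj a b) : 4 < i a b := by
  induction hn : i a b using Nat.strong_induction_on generalizing a with
  | _ n ih =>
    obtain ⟨u, hau, hlt⟩ := hdesc a b hab hnadj
    by_cases hub : Γ.Adj u b
    · have := hadj u b hub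
      omega
    · have hub' : u ≠ b := by
        rintro rfl
        exact hnadj hau
      have := ih _ (hn ▸ hlt) hub' hub rfl
      omega

/-- The witness is the first vertex of a pair maximising `i` on `F`. -/
theorem exists_mem_isClique_inter_neighborSet (hdiag : ∀ v, i v v = 0)
    (hadj : ∀ u v, Γ.Adj u v → i u v = 4)
    (hdesc : ∀ v w : V, v ≠ w → ¬Γ.Adj v w →
      ∃ u : V, Γ.Adj v u ∧ i u w < i v w ∧
        (∀ v', Γ.Adj v v' → v' ≠ u → i u w < i v' w) ∧
        (∀ v₁ v₂, Γ.Adj v v₁ → Γ.Adj v v₂ →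
          i u w < i v₁ w → i v₁ w ≤ i v w →
          i u w < i v₂ w → i v₂ w ≤ i v w → v₁ = v₂) ∧
        (∀ v'', Γ.Adj v v'' → i u w < i v'' w → i v'' w ≤ i v w → Γ.Adj v'' u))
    (F : Finset V) (hF : F.Nonempty) : ∃ v ∈ F, Γ.IsClique (↑F ∩ Γ.neighborSet v) := by
  obtain ⟨⟨v, w⟩, hvw, hmax⟩ :=
    Finset.exists_max_image (F ×ˢ F) (fun p => i p.1 p.2) (hF.product hF)
  have hmax' : ∀ a ∈ F, ∀ b ∈ F, i a b ≤ i v w := fun a ha b hb =>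
    hmax (a, b) (Finset.mem_product.mpr ⟨ha, hb⟩)
  refine ⟨v, (Finset.mem_product.mp hvw).1, fun a ⟨ha, hva⟩ b ⟨hb, hvb⟩ hab => ?_⟩
  by_contra hnab
  have hiab := four_lt_of_not_adj hadj
    (fun x y hxy hn => (hdesc x y hxy hn).imp fun _ h => ⟨h.1, h.2.1⟩) hab hnab
  have hiw : 4 < i v w := hiab.trans_le (hmax' a ha b hb)
  have hne : v ≠ w := by
    rintro rfl
    rw [hdiag] at hiw
    omega
  have hnadj : ¬Γ.Adj v w := fun h => by
    rw [hadj v w h] at hiw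
    omega
  obtain ⟨u, -, -, hbelow, hunique, hadj_u⟩ := hdesc v w hne hnadj
  have haw := hmax' a ha w (Finset.mem_product.mp hvw).2
  have hbw := hmax' b hb w (Finset.mem_product.mp hvw).2
  by_cases hau : a = u <;> by_cases hbu : b = u
  · exact hab (hau.trans hbu.symm)
  · exact hnab (hau ▸ (hadj_u b hvb (hbelow b hvb hbu) hbw).symm)
  · exact hnab (hbu ▸ hadj_u a hva (hbelow a hva hau) haw)
  · exact hab (hunique a b hva hvb (hbelow a hva hau) haw (hbelow b hvb hbu) hbw)

end Descent

theorem stmt3_general {V : Type*} (Γ : SimpleGraph V)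
    (hconn : Γ.Connected)
    (i : V → V → ℕ)
    (hzero : ∀ u v, i u v = 0 ↔ u = v)
    (hadj : ∀ u v, Γ.Adj u v ↔ u ≠ v ∧ i u v = 4)
    (htri : ∀ u v, Γ.Adj u v →
      ∃! t : {t : Finset V // IsTriangle Γ t}, u ∈ t.1 ∧ v ∈ t.1)
    (hdesc : ∀ v w : V, v ≠ w → ¬Γ.Adj v w →
      ∃ u : V, Γ.Adj v u ∧ i u w < i v w ∧
        (∀ v', Γ.Adj v v' → v' ≠ u → i u w < i v' w) ∧
        (∀ v₁ v₂, Γ.Adj v v₁ → Γ.Adj v v₂ →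
          i u w < i v₁ w → i v₁ w ≤ i v w →
          i u w < i v₂ w → i v₂ w ≤ i v w → v₁ = v₂) ∧
        (∀ v'', Γ.Adj v v'' → i u w < i v'' w → i v'' w ≤ i v w → Γ.Adj v'' u)) :
    (Subdiv Γ).IsTree :=
  ⟨Subdiv.connected hconn fun u v h => (htri u v h).exists,
    Subdiv.isAcyclic (fun u v h _ _ hs ht => (htri u v h).unique hs ht)
      (exists_mem_isClique_inter_neighborSet (fun v => (hzero v v).mpr rfl)
        (fun u v h => ((hadj u v).mp h).2) hdesc)⟩

/-- Scharlemann–Akbas: if `Γ` is a connected graph with a `G`-action and a symmetric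
intersection function `i` (vanishing exactly on the diagonal, with adjacency given by
`i = 4`), every edge lies in a unique triangle, and the unique-descent property of
Proposition 4 holds, then the spine graph `Γ̃` is a tree. -/
theorem stmt3 {V : Type*} (G : Type*) [Group G] [MulAction G V] (Γ : SimpleGraph V)
    (hact : ∀ (g : G) (u v : V), Γ.Adj u v → Γ.Adj (g • u) (g • v))
    (hconn : Γ.Connected)
    (i : V → V → ℕ)
    (hsymm : ∀ u v, i u v = i v u)
    (hzero : ∀ u v, i u v = 0 ↔ u = v)
    (hadj : ∀ u v, Γ.Adj u v ↔ u ≠ v ∧ i u v = 4)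
    (htri : ∀ u v, Γ.Adj u v →
      ∃! t : {t : Finset V // IsTriangle Γ t}, u ∈ t.1 ∧ v ∈ t.1)
    (hdesc : ∀ v w : V, v ≠ w → ¬Γ.Adj v w →
      ∃ u : V, Γ.Adj v u ∧ i u w < i v w ∧
        (∀ v', Γ.Adj v v' → v' ≠ u → i u w < i v' w) ∧
        (∀ v₁ v₂, Γ.Adj v v₁ → Γ.Adj v v₂ →
          i u w < i v₁ w → i v₁ w ≤ i v w →
          i u w < i v₂ w → i v₂ w ≤ i v w → v₁ = v₂) ∧
        (∀ v'', Γ.Adj v v'' → i u w < i v'' w → i v'' w ≤ i v w → Γ.Adj v'' u)) :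
    (Subdiv Γ).IsTree :=
  stmt3_general Γ hconn i hzero hadj htri hdesc
end

section
/- Let v₀, v₂, …, v_{2k}, … be a sequence of distinct vertices of a graph with intersection function i as above, forming (together with barycenters) a minimal cycle, so that consecutive even-indexed vertices satisfy i(v_j, v_{j+2}) = 4 and i(v_{last}, v₀) = 4. Suppose the uniqueness property of the descent vertex holds (as in Proposition 4 of the paper). Then i(v_j, v₀) < i(v_{j+2}, v₀) strictly increases along the cycle, contradicting i(v_{last}, v₀) = 4 > 4 being required at the end; hence no such minimal cycle exists. -/
/-- The induction inside the proof of Theorem 1: there is no minimal cycle of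
(even-indexed) vertices `v 0, v 1, ..., v (n-1)` (read cyclically, `v` is periodic with
period `n`), pairwise distinct, with consecutive intersection numbers equal to `4`
(adjacency) and no shortcut (`i (v j) (v (j+2)) ≠ 4`, by minimality of the cycle),
provided the unique-descent property of Proposition 4 holds: along such a cycle
`i (v j) (v 0)` would strictly increase, contradicting `i (v (n-1)) (v 0) = 4` at
the end. -/
theorem stmt5 {V : Type*}
    (i : V → V → ℕ)
    (hsymm : ∀ u v, i u v = i v u)
    (hzero : ∀ u v, i u v = 0 ↔ u = v)
    (hdesc : ∀ v w : V, v ≠ w → ¬(v ≠ w ∧ i v w = 4) →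
      ∃ u : V, (v ≠ u ∧ i v u = 4) ∧ i u w < i v w ∧
        (∀ v', (v ≠ v' ∧ i v v' = 4) → v' ≠ u → i u w < i v' w) ∧
        (∀ v₁ v₂, (v ≠ v₁ ∧ i v v₁ = 4) → (v ≠ v₂ ∧ i v v₂ = 4) →
          i u w < i v₁ w → i v₁ w ≤ i v w →
          i u w < i v₂ w → i v₂ w ≤ i v w → v₁ = v₂) ∧
        (∀ v'', (v ≠ v'' ∧ i v v'' = 4) → i u w < i v'' w → i v'' w ≤ i v w →
          (v'' ≠ u ∧ i v'' u = 4)))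
    (n : ℕ) (hn : 4 ≤ n) (v : ℕ → V)
    (hper : ∀ j, v (j + n) = v j)
    (hinj : ∀ j k, j < n → k < n → v j = v k → j = k)
    (hadj : ∀ j, i (v j) (v (j + 1)) = 4)
    (hmin : ∀ j, i (v j) (v (j + 2)) ≠ 4) :
    False := by
  -- Step 1: any positive intersection number is at least 4.
  have keyA : ∀ c : ℕ, ∀ x y : V, i x y = c → c < 4 → x = y := by
    intro c
    induction c using Nat.strong_induction_on with
    | _ c ih =>
      intro x y hxy hc4
      by_contra hne
      have hni : ¬(x ≠ y ∧ i x y = 4) := by rintro ⟨-, h4⟩; omega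
      obtain ⟨u, ⟨hxu_ne, hxu4⟩, hlt, -, -, -⟩ := hdesc x y hne hni
      have huy : u = y := ih (i u y) (by omega) u y rfl (by omega)
      rw [huy] at hxu4
      omega
  -- Step 2: periodicity modulo n.
  have hmod : ∀ j, v j = v (j % n) := by
    intro j
    induction j using Nat.strong_induction_on with
    | _ j ih =>
      rcases lt_or_ge j n with h | h
      · rw [Nat.mod_eq_of_lt h]
      · have hj : j = (j - n) + n := by omega
        have e : (j - n) % n = j % n := by
          conv_rhs => rw [hj]
          rw [Nat.add_mod_right]
        have e2 : v j = v (j - n) := by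
          conv_lhs => rw [hj]
          exact hper (j - n)
        rw [e2, ih (j - n) (by omega), e]
  -- Step 3: pick a pair maximizing the intersection number.
  obtain ⟨p, hp_mem, hp_max⟩ :=
    Finset.exists_max_image ((Finset.range n) ×ˢ (Finset.range n))
      (fun p => i (v p.1) (v p.2))
      ⟨(0, 2), by simp [Finset.mem_product]; omega⟩
  obtain ⟨m, k⟩ := p
  simp only [Finset.mem_product, Finset.mem_range] at hp_mem
  obtain ⟨hm, hk⟩ := hp_mem
  have hmax : ∀ j l, j < n → l < n → i (v j) (v l) ≤ i (v m) (v k) := by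
    intro j l hj hl
    exact hp_max (j, l) (by simp [Finset.mem_product]; omega)
  -- i (v 0) (v 2) ≥ 5
  have h02ne : v 0 ≠ v 2 := fun h => by
    have := hinj 0 2 (by omega) (by omega) h; omega
  have h02n4 : i (v 0) (v 2) ≠ 4 := hmin 0
  have h02ge : 5 ≤ i (v 0) (v 2) := by
    rcases lt_or_ge (i (v 0) (v 2)) 4 with h | h
    · exact absurd (keyA _ _ _ rfl h) h02ne
    · omega
  have hMge : 5 ≤ i (v m) (v k) := le_trans h02ge (hmax 0 2 (by omega) (by omega))
  have hmk_ne : v m ≠ v k := by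
    intro h
    have := (hzero (v m) (v k)).mpr h
    omega
  -- neighbours of v m on the cycle
  have hB4 : i (v m) (v (m + 1)) = 4 := hadj m
  have hA4 : i (v m) (v (m + n - 1)) = 4 := by
    have h1 := hadj (m + n - 1)
    have e : m + n - 1 + 1 = m + n := by omega
    rw [e, hper m] at h1
    exact (hsymm _ _).symm.trans h1
  have hmB_ne : v m ≠ v (m + 1) := by
    intro h
    have := (hzero (v m) (v (m + 1))).mpr h
    omega
  have hmA_ne : v m ≠ v (m + n - 1) := by
    intro h
    have := (hzero (v m) (v (m + n - 1))).mpr h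
    omega
  -- no shortcut between the two neighbours
  have hminAB : i (v (m + n - 1)) (v (m + 1)) ≠ 4 := by
    have h1 := hmin (m + n - 1)
    have e : m + n - 1 + 2 = (m + 1) + n := by omega
    rw [e, hper (m + 1)] at h1
    exact h1
  -- the two neighbours are distinct
  have hAB_ne : v (m + n - 1) ≠ v (m + 1) := by
    intro hEq
    have e1 : v ((m + n - 1) % n) = v ((m + 1) % n) := by
      rw [← hmod, ← hmod, hEq]
    have e2 : (m + n - 1) % n = (m + 1) % n :=
      hinj _ _ (Nat.mod_lt _ (by omega)) (Nat.mod_lt _ (by omega)) e1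
    have hME : (m + 1) ≡ (m + n - 1) [MOD n] := e2.symm
    have hdvd := (Nat.modEq_iff_dvd' (by omega)).mp hME
    have e3 : m + n - 1 - (m + 1) = n - 2 := by omega
    rw [e3] at hdvd
    have := Nat.le_of_dvd (by omega) hdvd
    omega
  -- values of neighbours are at most the max
  have hA_le : i (v (m + n - 1)) (v k) ≤ i (v m) (v k) := by
    rw [hmod (m + n - 1)]
    exact hmax _ _ (Nat.mod_lt _ (by omega)) hk
  have hB_le : i (v (m + 1)) (v k) ≤ i (v m) (v k) := by
    rw [hmod (m + 1)]
    exact hmax _ _ (Nat.mod_lt _ (by omega)) hk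
  -- apply the descent property at the maximizing pair
  obtain ⟨u, ⟨hmu_ne, hmu4⟩, hult, h3, h4u, h5⟩ :=
    hdesc (v m) (v k) hmk_ne (by rintro ⟨-, h4⟩; omega)
  by_cases hAu : v (m + n - 1) = u <;> by_cases hBu : v (m + 1) = u
  · exact hAB_ne (hAu.trans hBu.symm)
  · have hlt := h3 (v (m + 1)) ⟨hmB_ne, hB4⟩ hBu
    have h54 := h5 (v (m + 1)) ⟨hmB_ne, hB4⟩ hlt hB_le
    have : i (v (m + n - 1)) (v (m + 1)) = 4 := by
      rw [hsymm]
      rw [hAu]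
      exact h54.2
    exact hminAB this
  · have hlt := h3 (v (m + n - 1)) ⟨hmA_ne, hA4⟩ hAu
    have h54 := h5 (v (m + n - 1)) ⟨hmA_ne, hA4⟩ hlt hA_le
    have : i (v (m + n - 1)) (v (m + 1)) = 4 := by
      rw [hBu]
      exact h54.2
    exact hminAB this
  · have hltA := h3 (v (m + n - 1)) ⟨hmA_ne, hA4⟩ hAu
    have hltB := h3 (v (m + 1)) ⟨hmB_ne, hB4⟩ hBu
    exact hAB_ne (h4u (v (m + n - 1)) (v (m + 1)) ⟨hmA_ne, hA4⟩ ⟨hmB_ne, hB4⟩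
      hltA hA_le hltB hB_le)
end
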